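/- Let d ≥ 1 and let η, ξ be height configurations on ℤ^d with ξ(x) ≤ η(x) for all x ∈ ℤ^d. If η is stabilizable, then ξ is stabilizable. -/

import Mathlib

open MeasureTheory
open scoped ENNReal

/-- Nearest-neighbour adjacency on `ℤ^d`: `|x - y| = 1`. -/
def adj (d : ℕ) (x y : Fin d → ℤ) : Prop := (∑ i, (x i - y i).natAbs) = 1

instance (d : ℕ) (x y : Fin d → ℤ) : Decidable (adj d x y) := by
  unfold adj; infer_instance

/-- The finite-volume toppling operator `(Δ_V m)(x)`, for `x ∈ V`. -/
def lapV (d : ℕ) (V : Finset (Fin d → ℤ)) (m : (Fin d → ℤ) → ℕ) (x : Fin d → ℤ) : ℤ :=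
  2 * d * (m x : ℤ) - ∑ y ∈ V.filter (fun y => adj d x y), (m y : ℤ)

/-- `m` is a vector of toppling numbers making `η` stable in `V`:
`η(x) - (Δ_V m)(x) ≤ 2d` for all `x ∈ V`. -/
def Stabilizes (d : ℕ) (V : Finset (Fin d → ℤ)) (η m : (Fin d → ℤ) → ℕ) : Prop :=
  ∀ x ∈ V, (η x : ℤ) - lapV d V m x ≤ 2 * d

/-- `m` is the pointwise least (on `V`) vector of toppling numbers stabilizing `η` in `V`,
i.e. `m = m_V^η` on `V`. -/
def IsMinStab (d : ℕ) (V : Finset (Fin d → ℤ)) (η m : (Fin d → ℤ) → ℕ) : Prop :=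
  Stabilizes d V η m ∧ ∀ m', Stabilizes d V η m' → ∀ x ∈ V, m x ≤ m' x

/-- `η` is stabilizable: for every `x`, `sup_V m_V^η(x) < ∞`. -/
def Stabilizable (d : ℕ) (η : (Fin d → ℤ) → ℕ) : Prop :=
  ∀ x : Fin d → ℤ, ∃ C : ℕ, ∀ (V : Finset (Fin d → ℤ)) (m : (Fin d → ℤ) → ℕ),
    IsMinStab d V η m → x ∈ V → m x ≤ C

/-- The set `𝒮` of stabilizable configurations. -/
def StabSet (d : ℕ) : Set ((Fin d → ℤ) → ℕ) := {η | Stabilizable d η}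

/-- The set of height configurations (all heights at least `1`). -/
def Heights (d : ℕ) : Set ((Fin d → ℤ) → ℕ) := {η | ∀ x, 1 ≤ η x}

/-- The coordinate shift `τ_z η (x) = η (x + z)`. -/
def shiftC (d : ℕ) (z : Fin d → ℤ) (η : (Fin d → ℤ) → ℕ) : (Fin d → ℤ) → ℕ :=
  fun x => η (x + z)

/-- `ν` is stationary (translation invariant). -/
def Stationary (d : ℕ) (ν : Measure ((Fin d → ℤ) → ℕ)) : Prop :=
  ∀ z : Fin d → ℤ, MeasurePreserving (shiftC d z) ν ν

/-- `ν` is ergodic under the shift action: shift-invariant Borel sets are trivial. -/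
def ErgodicShift (d : ℕ) (ν : Measure ((Fin d → ℤ) → ℕ)) : Prop :=
  ∀ A : Set ((Fin d → ℤ) → ℕ), MeasurableSet A → (∀ z, shiftC d z ⁻¹' A = A) →
    ν A = 0 ∨ ν A = 1


lemma adj_cases {d : ℕ} {x y : Fin d → ℤ} (h : adj d x y) :
    ∃ i, y = Function.update x i (x i + 1) ∨ y = Function.update x i (x i - 1) := by
  unfold adj at h
  obtain ⟨i, hi⟩ : ∃ i, (x i - y i).natAbs ≠ 0 := by
    by_contra hc
    push_neg at hc
    simp [hc] at h
  have h1 : (x i - y i).natAbs = 1 := by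
    have hle : (x i - y i).natAbs ≤ 1 := by
      rw [← h]
      exact Finset.single_le_sum (f := fun j => (x j - y j).natAbs)
        (fun j _ => Nat.zero_le _) (Finset.mem_univ i)
    omega
  have hothers : ∀ j, j ≠ i → x j = y j := by
    intro j hj
    have hadd := Finset.sum_erase_add Finset.univ (fun k => (x k - y k).natAbs)
      (Finset.mem_univ i)
    have hsum : ∑ k ∈ Finset.univ.erase i, (x k - y k).natAbs = 0 := by
      omega
    have hz := Finset.sum_eq_zero_iff.mp hsum j (Finset.mem_erase.mpr ⟨hj, Finset.mem_univ j⟩)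
    have : x j - y j = 0 := Int.natAbs_eq_zero.mp hz
    omega
  rcases Int.natAbs_eq_iff.mp h1 with hc | hc
  · -- x i - y i = 1, so y i = x i - 1
    refine ⟨i, Or.inr ?_⟩
    funext j
    rcases eq_or_ne j i with rfl | hj
    · rw [Function.update_self]
      have : x j - y j = 1 := by exact_mod_cast hc
      omega
    · rw [Function.update_of_ne hj]; exact (hothers j hj).symm
  · refine ⟨i, Or.inl ?_⟩
    funext j
    rcases eq_or_ne j i with rfl | hj
    · rw [Function.update_self]
      have : x j - y j = -1 := by exact_mod_cast hc
      omega
    · rw [Function.update_of_ne hj]; exact (hothers j hj).symm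

lemma stab_min {d : ℕ} {V : Finset (Fin d → ℤ)} {η m1 m2 : (Fin d → ℤ) → ℕ}
    (h1 : Stabilizes d V η m1) (h2 : Stabilizes d V η m2) :
    Stabilizes d V η (fun x => min (m1 x) (m2 x)) := by
  intro x hx
  rcases le_total (m1 x) (m2 x) with h | h
  · have key : lapV d V m1 x ≤ lapV d V (fun y => min (m1 y) (m2 y)) x := by
      unfold lapV
      have hx1 : ((min (m1 x) (m2 x) : ℕ) : ℤ) = (m1 x : ℤ) := by rw [min_eq_left h]
      rw [hx1]
      have : ∑ y ∈ V.filter (fun y => adj d x y), ((min (m1 y) (m2 y) : ℕ) : ℤ)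
          ≤ ∑ y ∈ V.filter (fun y => adj d x y), (m1 y : ℤ) :=
        Finset.sum_le_sum (fun y _ => by exact_mod_cast min_le_left _ _)
      linarith
    have := h1 x hx
    linarith
  · have key : lapV d V m2 x ≤ lapV d V (fun y => min (m1 y) (m2 y)) x := by
      unfold lapV
      have hx1 : ((min (m1 x) (m2 x) : ℕ) : ℤ) = (m2 x : ℤ) := by rw [min_eq_right h]
      rw [hx1]
      have : ∑ y ∈ V.filter (fun y => adj d x y), ((min (m1 y) (m2 y) : ℕ) : ℤ)
          ≤ ∑ y ∈ V.filter (fun y => adj d x y), (m2 y : ℤ) :=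
        Finset.sum_le_sum (fun y _ => by exact_mod_cast min_le_right _ _)
      linarith
    have := h2 x hx
    linarith

lemma exists_stab (d : ℕ) (hd : 1 ≤ d) (V : Finset (Fin d → ℤ)) (η : (Fin d → ℤ) → ℕ) :
    ∃ m, Stabilizes d V η m := by
  haveI : NeZero d := ⟨by omega⟩
  rcases V.eq_empty_or_nonempty with rfl | hne
  · exact ⟨fun _ => 0, fun x hx => by simp at hx⟩
  set C : ℤ := V.sup' hne (fun z => (|z 0| + 1) ^ 2) with hCdef
  set K : ℤ := ((V.sup η : ℕ) : ℤ) with hKdef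
  have hK0 : 0 ≤ K := Int.natCast_nonneg _
  set g : (Fin d → ℤ) → ℤ := fun y => K * (C - (y 0) ^ 2) with hgdef
  set m : (Fin d → ℤ) → ℕ := fun y => (g y).toNat with hmdef
  have hsq : ∀ (a b : ℤ), |a| ≤ b → a ^ 2 ≤ b ^ 2 := by
    intro a b hab
    calc a ^ 2 = |a| ^ 2 := (sq_abs a).symm
    _ ≤ b ^ 2 := pow_le_pow_left₀ (abs_nonneg a) hab 2
  have hCV : ∀ z ∈ V, (|z 0| + 1) ^ 2 ≤ C :=
    fun z hz => Finset.le_sup' (fun z => (|z 0| + 1) ^ 2) hz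
  have hgval : ∀ y, (y 0) ^ 2 ≤ C → (m y : ℤ) = g y := by
    intro y hy
    exact Int.toNat_of_nonneg (mul_nonneg hK0 (by linarith))
  refine ⟨m, ?_⟩
  intro x hx
  have hxC : (x 0) ^ 2 ≤ C :=
    le_trans (hsq _ _ (by linarith [abs_nonneg (x 0)])) (hCV x hx)
  set A : Finset (Fin d → ℤ) :=
    Finset.univ.image (fun i => Function.update x i (x i + 1)) with hA
  set B : Finset (Fin d → ℤ) :=
    Finset.univ.image (fun i => Function.update x i (x i - 1)) with hB
  set N : Finset (Fin d → ℤ) := A ∪ B with hNdef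
  set F : Finset (Fin d → ℤ) := V.filter (fun y => adj d x y) with hF
  have hmemN : ∀ y ∈ N, ∃ i, y = Function.update x i (x i + 1)
      ∨ y = Function.update x i (x i - 1) := by
    intro y hy
    rw [hNdef, Finset.mem_union, hA, hB] at hy
    rcases hy with hy | hy <;>
      · simp only [Finset.mem_image, Finset.mem_univ, true_and] at hy
        obtain ⟨i, hi⟩ := hy
        exact ⟨i, by tauto⟩
  have hNabs : ∀ y ∈ N, |y 0| ≤ |x 0| + 1 := by
    intro y hy
    obtain ⟨i, hi⟩ := hmemN y hy
    have habs1 : |x 0 + 1| ≤ |x 0| + 1 := by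
      calc |x 0 + 1| ≤ |x 0| + |(1:ℤ)| := abs_add_le _ _
        _ = |x 0| + 1 := by norm_num
    have habs2 : |x 0 - 1| ≤ |x 0| + 1 := by
      calc |x 0 - 1| ≤ |x 0| + |(1:ℤ)| := abs_sub _ _
        _ = |x 0| + 1 := by norm_num
    rcases hi with rfl | rfl <;> rcases eq_or_ne (0 : Fin d) i with h0 | h0
    · rw [← h0, Function.update_self]; exact habs1
    · rw [Function.update_of_ne h0]; linarith
    · rw [← h0, Function.update_self]; exact habs2
    · rw [Function.update_of_ne h0]; linarith
  have hgN : ∀ y ∈ N, 0 ≤ g y := by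
    intro y hy
    have h1 : (y 0) ^ 2 ≤ C := le_trans (hsq _ _ (hNabs y hy)) (hCV x hx)
    exact mul_nonneg hK0 (by linarith)
  have hFsub : F ⊆ N := by
    intro y hy
    rw [hF, Finset.mem_filter] at hy
    obtain ⟨i, hi⟩ := adj_cases hy.2
    rw [hNdef, Finset.mem_union]
    rcases hi with rfl | rfl
    · exact Or.inl (Finset.mem_image.mpr ⟨i, Finset.mem_univ i, rfl⟩)
    · exact Or.inr (Finset.mem_image.mpr ⟨i, Finset.mem_univ i, rfl⟩)
  have hsumFN : ∑ y ∈ F, g y ≤ ∑ y ∈ N, g y :=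
    Finset.sum_le_sum_of_subset_of_nonneg hFsub (fun y hy _ => hgN y hy)
  have hdisj : Disjoint A B := by
    rw [Finset.disjoint_left]
    intro a haA haB
    simp only [hA, hB, Finset.mem_image, Finset.mem_univ, true_and] at haA haB
    obtain ⟨i, rfl⟩ := haA
    obtain ⟨j, hj⟩ := haB
    rcases eq_or_ne j i with rfl | hij
    · have := congrFun hj j
      rw [Function.update_self, Function.update_self] at this
      linarith
    · have := congrFun hj j
      rw [Function.update_self, Function.update_of_ne hij] at this
      linarith
  have hinjA : ∀ i ∈ Finset.univ, ∀ j ∈ (Finset.univ : Finset (Fin d)),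
      Function.update x i (x i + 1) = Function.update x j (x j + 1) → i = j := by
    intro i _ j _ hEq
    by_contra hij
    have := congrFun hEq i
    rw [Function.update_self, Function.update_of_ne hij] at this
    linarith
  have hinjB : ∀ i ∈ Finset.univ, ∀ j ∈ (Finset.univ : Finset (Fin d)),
      Function.update x i (x i - 1) = Function.update x j (x j - 1) → i = j := by
    intro i _ j _ hEq
    by_contra hij
    have := congrFun hEq i
    rw [Function.update_self, Function.update_of_ne hij] at this
    linarith
  have hterm : ∀ i : Fin d, g (Function.update x i (x i + 1))
      + g (Function.update x i (x i - 1))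
      = 2 * g x + (if i = 0 then -(2 * K) else 0) := by
    intro i
    rcases eq_or_ne i 0 with rfl | h0
    · rw [if_pos rfl]
      have e1 : Function.update x (0 : Fin d) (x 0 + 1) (0 : Fin d) = x 0 + 1 :=
        Function.update_self _ _ _
      have e2 : Function.update x (0 : Fin d) (x 0 - 1) (0 : Fin d) = x 0 - 1 :=
        Function.update_self _ _ _
      simp only [hgdef, e1, e2]
      ring
    · rw [if_neg h0]
      have e1 : Function.update x i (x i + 1) (0 : Fin d) = x 0 :=
        Function.update_of_ne (fun h => h0 h.symm) _ _
      have e2 : Function.update x i (x i - 1) (0 : Fin d) = x 0 :=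
        Function.update_of_ne (fun h => h0 h.symm) _ _
      simp only [hgdef, e1, e2]
      ring
  have hsumN : ∑ y ∈ N, g y = 2 * d * g x - 2 * K := by
    rw [hNdef, Finset.sum_union hdisj, hA, hB, Finset.sum_image hinjA,
      Finset.sum_image hinjB, ← Finset.sum_add_distrib]
    calc ∑ i : Fin d, (g (Function.update x i (x i + 1)) + g (Function.update x i (x i - 1)))
        = ∑ i : Fin d, (2 * g x + (if i = 0 then -(2 * K) else 0)) :=
          Finset.sum_congr rfl (fun i _ => hterm i)
      _ = 2 * d * g x - 2 * K := by
          rw [Finset.sum_add_distrib, Finset.sum_const,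
            Finset.sum_ite_eq' Finset.univ (0 : Fin d) (fun _ => -(2 * K))]
          simp [Finset.card_univ]
          ring
  have hmF : ∑ y ∈ F, (m y : ℤ) = ∑ y ∈ F, g y := by
    apply Finset.sum_congr rfl
    intro y hy
    have hyV : y ∈ V := (Finset.mem_filter.mp (hF ▸ hy)).1
    exact hgval y (le_trans (hsq _ _ (by linarith [abs_nonneg (y 0)])) (hCV y hyV))
  have hlap : 2 * K ≤ lapV d V m x := by
    unfold lapV
    rw [hgval x hxC]
    rw [show V.filter (fun y => adj d x y) = F from hF.symm, hmF]
    have h2 : ∑ y ∈ F, g y ≤ 2 * d * g x - 2 * K := hsumN ▸ hsumFN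
    linarith
  have hηx : (η x : ℤ) ≤ K := by
    rw [hKdef]
    exact_mod_cast Finset.le_sup hx
  have hd' : (1 : ℤ) ≤ (d : ℤ) := by exact_mod_cast hd
  linarith

lemma exists_minStab (d : ℕ) (hd : 1 ≤ d) (V : Finset (Fin d → ℤ))
    (η : (Fin d → ℤ) → ℕ) : ∃ m, IsMinStab d V η m := by
  set T : Set ℕ := {n | ∃ m, Stabilizes d V η m ∧ ∑ x ∈ V, m x = n} with hT
  have hTne : T.Nonempty := by
    obtain ⟨m, hm⟩ := exists_stab d hd V η
    exact ⟨∑ x ∈ V, m x, m, hm, rfl⟩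
  obtain ⟨m0, hm0, hm0sum⟩ := Nat.sInf_mem hTne
  refine ⟨m0, hm0, ?_⟩
  intro m' hm' x hx
  set mm : (Fin d → ℤ) → ℕ := fun y => min (m0 y) (m' y) with hmm
  have hmmst : Stabilizes d V η mm := stab_min hm0 hm'
  have h1 : sInf T ≤ ∑ y ∈ V, mm y := Nat.sInf_le ⟨mm, hmmst, rfl⟩
  have h2 : ∑ y ∈ V, mm y ≤ ∑ y ∈ V, m0 y :=
    Finset.sum_le_sum (fun y _ => min_le_left _ _)
  have hEq : ∑ y ∈ V, mm y = ∑ y ∈ V, m0 y := le_antisymm h2 (by omega)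
  have heach := (Finset.sum_eq_sum_iff_of_le (fun y _ => min_le_left (m0 y) (m' y))).mp hEq x hx
  calc m0 x = min (m0 x) (m' x) := heach.symm
    _ ≤ m' x := min_le_right _ _

/-- stabilizability is monotone: if `ξ ≤ η` pointwise and `η` is stabilizable,
then so is `ξ`. -/
theorem stabilizable_of_le (d : ℕ) (hd : 1 ≤ d) (η ξ : (Fin d → ℤ) → ℕ)
    (hη : ∀ x, 1 ≤ η x) (hξ : ∀ x, 1 ≤ ξ x) (hle : ∀ x, ξ x ≤ η x)
    (hstab : Stabilizable d η) : Stabilizable d ξ := by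
  intro x
  obtain ⟨C, hC⟩ := hstab x
  refine ⟨C, fun V m hm hxV => ?_⟩
  obtain ⟨m', hm'⟩ := exists_minStab d hd V η
  have hstabξ : Stabilizes d V ξ m' := by
    intro y hy
    have h1 := hm'.1 y hy
    have h2 : (ξ y : ℤ) ≤ (η y : ℤ) := by exact_mod_cast hle y
    linarith
  exact le_trans (hm.2 m' hstabξ x hxV) (hC V m' hm' hxV)
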